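/- arXiv:1906.12291 — 4 statements merged into one kernel-verified Lean document; each statement's English description precedes it below -/
import Mathlib

section
/- The partial trace over the third factor of the three-copy operator ρ_W (as above) equals ω_{N,2} = (N² I + N·SWAP)/(N⁴+N²); consequently, any mixed-state 3-design is also a mixed-state 2-design. -/
open Matrix ComplexOrder

noncomputable def o12 (N : ℕ) : Matrix (Fin N × Fin N × Fin N) (Fin N × Fin N × Fin N) ℂ :=
  fun x y => if x.1 = y.2.1 ∧ x.2.1 = y.1 ∧ x.2.2 = y.2.2 then 1 else 0

noncomputable def o13 (N : ℕ) : Matrix (Fin N × Fin N × Fin N) (Fin N × Fin N × Fin N) ℂ :=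
  fun x y => if x.1 = y.2.2 ∧ x.2.1 = y.2.1 ∧ x.2.2 = y.1 then 1 else 0

noncomputable def o23 (N : ℕ) : Matrix (Fin N × Fin N × Fin N) (Fin N × Fin N × Fin N) ℂ :=
  fun x y => if x.1 = y.1 ∧ x.2.1 = y.2.2 ∧ x.2.2 = y.2.1 then 1 else 0

noncomputable def o123 (N : ℕ) : Matrix (Fin N × Fin N × Fin N) (Fin N × Fin N × Fin N) ℂ :=
  fun x y => if x.1 = y.2.2 ∧ x.2.1 = y.1 ∧ x.2.2 = y.2.1 then 1 else 0

noncomputable def o132 (N : ℕ) : Matrix (Fin N × Fin N × Fin N) (Fin N × Fin N × Fin N) ℂ :=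
  fun x y => if x.1 = y.2.1 ∧ x.2.1 = y.2.2 ∧ x.2.2 = y.1 then 1 else 0

/-- The three-copy Werner-type operator ρ_W. -/
noncomputable def rhoW (N : ℕ) : Matrix (Fin N × Fin N × Fin N) (Fin N × Fin N × Fin N) ℂ :=
  ((N : ℂ) ^ 3 / ((N : ℂ) ^ 6 + 3 * (N : ℂ) ^ 4 + 2 * (N : ℂ) ^ 2)) •
      (1 : Matrix (Fin N × Fin N × Fin N) (Fin N × Fin N × Fin N) ℂ)
    + ((N : ℂ) ^ 2 / ((N : ℂ) ^ 6 + 3 * (N : ℂ) ^ 4 + 2 * (N : ℂ) ^ 2)) •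
      (o12 N + o23 N + o13 N)
    + ((N : ℂ) / ((N : ℂ) ^ 6 + 3 * (N : ℂ) ^ 4 + 2 * (N : ℂ) ^ 2)) •
      (o123 N + o132 N)

/-- The SWAP operator on ℂ^N ⊗ ℂ^N. -/
noncomputable def swapOp (N : ℕ) : Matrix (Fin N × Fin N) (Fin N × Fin N) ℂ :=
  fun a b => if a.1 = b.2 ∧ a.2 = b.1 then 1 else 0

/-- ω_{N,2} = (N² I + N·SWAP)/(N⁴ + N²). -/
noncomputable def omega2 (N : ℕ) : Matrix (Fin N × Fin N) (Fin N × Fin N) ℂ :=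
  ((N ^ 4 + N ^ 2 : ℂ))⁻¹ •
    ((N ^ 2 : ℂ) • (1 : Matrix (Fin N × Fin N) (Fin N × Fin N) ℂ) + (N : ℂ) • swapOp N)

/-- Partial trace over the third tensor factor. -/
noncomputable def ptr3 {N : ℕ} (A : Matrix (Fin N × Fin N × Fin N) (Fin N × Fin N × Fin N) ℂ) :
    Matrix (Fin N × Fin N) (Fin N × Fin N) ℂ :=
  fun a b => ∑ k : Fin N, A (a.1, a.2, k) (b.1, b.2, k)

/-- Two-fold tensor power of an N×N matrix. -/
noncomputable def pow2 {N : ℕ} (ρ : Matrix (Fin N) (Fin N) ℂ) :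
    Matrix (Fin N × Fin N) (Fin N × Fin N) ℂ :=
  fun a b => ρ a.1 b.1 * ρ a.2 b.2

/-- Three-fold tensor power of an N×N matrix. -/
noncomputable def pow3 {N : ℕ} (ρ : Matrix (Fin N) (Fin N) ℂ) :
    Matrix (Fin N × Fin N × Fin N) (Fin N × Fin N × Fin N) ℂ :=
  fun a b => ρ a.1 b.1 * ρ a.2.1 b.2.1 * ρ a.2.2 b.2.2

/- ### Auxiliary lemmas -/

lemma ptr3_add {N : ℕ} (A B : Matrix (Fin N × Fin N × Fin N) (Fin N × Fin N × Fin N) ℂ) :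
    ptr3 (A + B) = ptr3 A + ptr3 B := by
  funext a b; simp [ptr3, Finset.sum_add_distrib]

lemma ptr3_smul {N : ℕ} (c : ℂ) (A : Matrix (Fin N × Fin N × Fin N) (Fin N × Fin N × Fin N) ℂ) :
    ptr3 (c • A) = c • ptr3 A := by
  funext a b; simp [ptr3, Finset.mul_sum]

lemma ptr3_one {N : ℕ} : ptr3 (1 : Matrix (Fin N × Fin N × Fin N) (Fin N × Fin N × Fin N) ℂ)
    = (N : ℂ) • 1 := by
  funext a b
  obtain ⟨a1, a2⟩ := a; obtain ⟨b1, b2⟩ := b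
  by_cases h1 : a1 = b1 <;> by_cases h2 : a2 = b2 <;>
    simp_all [ptr3, Matrix.one_apply, Prod.ext_iff, Finset.sum_ite_eq, Finset.sum_ite_eq',
      eq_comm, Finset.filter_and, Finset.filter_eq', Finset.filter_eq]

lemma ptr3_o12 (N : ℕ) : ptr3 (o12 N) = (N : ℂ) • swapOp N := by
  funext a b
  obtain ⟨a1, a2⟩ := a; obtain ⟨b1, b2⟩ := b
  by_cases h1 : a1 = b2 <;> by_cases h2 : a2 = b1 <;>
    simp_all [ptr3, o12, swapOp, Finset.sum_ite_eq, Finset.sum_ite_eq',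
      eq_comm, Finset.filter_and, Finset.filter_eq', Finset.filter_eq]

lemma ptr3_o13 (N : ℕ) : ptr3 (o13 N) = 1 := by
  funext a b
  obtain ⟨a1, a2⟩ := a; obtain ⟨b1, b2⟩ := b
  by_cases h1 : a1 = b1 <;> by_cases h2 : a2 = b2 <;>
    simp_all [ptr3, o13, Matrix.one_apply, Prod.ext_iff, Finset.sum_ite_eq, Finset.sum_ite_eq',
      eq_comm, Finset.filter_and, Finset.filter_eq', Finset.filter_eq]

lemma ptr3_o23 (N : ℕ) : ptr3 (o23 N) = 1 := by
  funext a b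
  obtain ⟨a1, a2⟩ := a; obtain ⟨b1, b2⟩ := b
  by_cases h1 : a1 = b1 <;> by_cases h2 : a2 = b2 <;>
    simp_all [ptr3, o23, Matrix.one_apply, Prod.ext_iff, Finset.sum_ite_eq, Finset.sum_ite_eq',
      eq_comm, Finset.filter_and, Finset.filter_eq', Finset.filter_eq]

lemma ptr3_o123 (N : ℕ) : ptr3 (o123 N) = swapOp N := by
  funext a b
  obtain ⟨a1, a2⟩ := a; obtain ⟨b1, b2⟩ := b
  by_cases h1 : a1 = b2 <;> by_cases h2 : a2 = b1 <;>
    simp_all [ptr3, o123, swapOp, Finset.sum_ite_eq, Finset.sum_ite_eq',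
      eq_comm, Finset.filter_and, Finset.filter_eq', Finset.filter_eq]

lemma ptr3_o132 (N : ℕ) : ptr3 (o132 N) = swapOp N := by
  funext a b
  obtain ⟨a1, a2⟩ := a; obtain ⟨b1, b2⟩ := b
  by_cases h1 : a1 = b2 <;> by_cases h2 : a2 = b1 <;>
    simp_all [ptr3, o132, swapOp, Finset.sum_ite_eq, Finset.sum_ite_eq',
      eq_comm, Finset.filter_and, Finset.filter_eq', Finset.filter_eq]

lemma ptr3_sum {N M : ℕ} (A : Fin M → Matrix (Fin N × Fin N × Fin N) (Fin N × Fin N × Fin N) ℂ) :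
    ptr3 (∑ i, A i) = ∑ i, ptr3 (A i) := by
  funext a b
  simp [ptr3, Matrix.sum_apply]
  rw [Finset.sum_comm]

lemma ptr3_pow3 {N : ℕ} (ρ : Matrix (Fin N) (Fin N) ℂ) (h : ρ.trace = 1) :
    ptr3 (pow3 ρ) = pow2 ρ := by
  funext a b
  have : ∑ k : Fin N, ρ a.1 b.1 * ρ a.2 b.2 * ρ k k
      = ρ a.1 b.1 * ρ a.2 b.2 * ρ.trace := by
    rw [Matrix.trace, ← Finset.mul_sum]; rfl
  simpa [ptr3, pow3, pow2, h] using this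

lemma ptr3_rhoW (N : ℕ) (hN : 0 < N) : ptr3 (rhoW N) = omega2 N := by
  have hN0 : (N : ℂ) ≠ 0 := Nat.cast_ne_zero.mpr hN.ne'
  have hD : (N : ℂ) ^ 6 + 3 * (N : ℂ) ^ 4 + 2 * (N : ℂ) ^ 2 ≠ 0 := by
    have h1 : ((N ^ 6 + 3 * N ^ 4 + 2 * N ^ 2 : ℕ) : ℂ) ≠ 0 :=
      Nat.cast_ne_zero.mpr (by positivity)
    push_cast at h1
    convert h1 using 2
  have hE : (N : ℂ) ^ 4 + (N : ℂ) ^ 2 ≠ 0 := by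
    have h1 : ((N ^ 4 + N ^ 2 : ℕ) : ℂ) ≠ 0 := Nat.cast_ne_zero.mpr (by positivity)
    push_cast at h1
    exact h1
  set D : ℂ := (N : ℂ) ^ 6 + 3 * (N : ℂ) ^ 4 + 2 * (N : ℂ) ^ 2 with hDdef
  have step : ptr3 (rhoW N)
      = ((N : ℂ) ^ 3 / D * (N : ℂ) + 2 * ((N : ℂ) ^ 2 / D)) • 1
        + ((N : ℂ) ^ 2 / D * (N : ℂ) + 2 * ((N : ℂ) / D)) • swapOp N := by
    rw [rhoW, ptr3_add, ptr3_add, ptr3_smul, ptr3_smul, ptr3_smul,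
      ptr3_add, ptr3_add, ptr3_add, ptr3_one, ptr3_o12, ptr3_o13, ptr3_o23,
      ptr3_o123, ptr3_o132]
    module
  rw [step, omega2]
  have hc1 : (N : ℂ) ^ 3 / D * (N : ℂ) + 2 * ((N : ℂ) ^ 2 / D)
      = ((N : ℂ) ^ 4 + (N : ℂ) ^ 2)⁻¹ * (N : ℂ) ^ 2 := by
    rw [hDdef]; field_simp; ring
  have hc2 : (N : ℂ) ^ 2 / D * (N : ℂ) + 2 * ((N : ℂ) / D)
      = ((N : ℂ) ^ 4 + (N : ℂ) ^ 2)⁻¹ * (N : ℂ) := by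
    rw [hDdef]; field_simp; ring
  rw [hc1, hc2, smul_add, smul_smul, smul_smul]

/-- The partial trace over the third factor of ρ_W equals ω_{N,2}; consequently any
mixed-state 3-design is also a mixed-state 2-design. -/
theorem stmt8 (N : ℕ) (hN : 0 < N) :
    ptr3 (rhoW N) = omega2 N ∧
    (∀ (M : ℕ), 0 < M → ∀ ρ : Fin M → Matrix (Fin N) (Fin N) ℂ,
      (∀ i, (ρ i).PosSemidef) → (∀ i, (ρ i).trace = 1) →
      (M : ℂ)⁻¹ • ∑ i, pow3 (ρ i) = rhoW N →
      (M : ℂ)⁻¹ • ∑ i, pow2 (ρ i) = omega2 N) := by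
  refine ⟨ptr3_rhoW N hN, fun M hM ρ _ htr heq => ?_⟩
  have := congrArg ptr3 heq
  rw [ptr3_smul, ptr3_sum, ptr3_rhoW N hN] at this
  rw [← this]
  congr 1
  exact Finset.sum_congr rfl fun i _ => (ptr3_pow3 (ρ i) (htr i)).symm
end

section
/- Let {ρ̃_i}_{i=1}^M be positive operators with Σ_i ρ̃_i = I_N and (M/N²) Σ_i ρ̃_i ⊗ ρ̃_i = (N² I + N·SWAP)/(N⁴+N²). Then every N×N density matrix ρ can be reconstructed as ρ = ((N²+1)M/N) Σ_i p_i ρ̃_i − N·I_N, where p_i = Tr(ρ̃_i ρ). -/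
open Matrix ComplexOrder Kronecker

/-!
Apply `T ↦ Tr₂ (T (1 ⊗ ρ))` to both sides of the design identity. It sends `A ⊗ B` to
`Tr (B ρ) • A`, so the left side becomes `(M / N²) • ∑ pᵢ • Eᵢ`, while it sends `1` to
`Tr ρ • 1 = 1` and `SWAP` to `ρ`. The result is a linear equation that can be solved for `ρ`.
-/

namespace Matrix

variable {m n R : Type*} [Fintype n] [CommSemiring R]

def partialTraceRight : Matrix (m × n) (m × n) R →ₗ[R] Matrix m m R where
  toFun T := of fun a c => ∑ b, T (a, b) (c, b)
  map_add' S T := by ext; simp [Finset.sum_add_distrib]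
  map_smul' r T := by ext; simp [Finset.mul_sum]

theorem partialTraceRight_apply (T : Matrix (m × n) (m × n) R) (a c : m) :
    partialTraceRight T a c = ∑ b, T (a, b) (c, b) := rfl

theorem partialTraceRight_kronecker (A : Matrix m m R) (B : Matrix n n R) :
    partialTraceRight (A ⊗ₖ B) = B.trace • A := by
  ext a c
  simp [partialTraceRight_apply, trace, Finset.mul_sum, mul_comm]

theorem partialTraceRight_one_kronecker [DecidableEq m] (ρ : Matrix n n R) :
    partialTraceRight ((1 : Matrix m m R) ⊗ₖ ρ) = ρ.trace • 1 :=
  partialTraceRight_kronecker 1 ρ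

theorem partialTraceRight_kronecker_mul_one_kronecker [Fintype m] [DecidableEq m]
    (A : Matrix m m R) (B ρ : Matrix n n R) :
    partialTraceRight ((A ⊗ₖ B) * (1 ⊗ₖ ρ)) = (B * ρ).trace • A := by
  rw [← mul_kronecker_mul, mul_one, partialTraceRight_kronecker]

end Matrix

theorem partialTraceRight_swapOp_mul_one_kronecker {N : ℕ} (ρ : Matrix (Fin N) (Fin N) ℂ) :
    partialTraceRight (swapOp N * (1 ⊗ₖ ρ)) = ρ := by
  ext a c
  simp [partialTraceRight_apply, swapOp, mul_apply, Fintype.sum_prod_type, ite_and, one_apply]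

theorem stmt9_general {N M : ℕ} (hN : 0 < N)
    (E : Fin M → Matrix (Fin N) (Fin N) ℂ)
    (hdesign : ((M : ℂ) / (N : ℂ) ^ 2) • ∑ i, (E i) ⊗ₖ (E i) =
      ((N ^ 4 + N ^ 2 : ℂ))⁻¹ •
        ((N ^ 2 : ℂ) • (1 : Matrix (Fin N × Fin N) (Fin N × Fin N) ℂ) + (N : ℂ) • swapOp N))
    (ρ : Matrix (Fin N) (Fin N) ℂ) (hρtr : ρ.trace = 1) :
    ρ = ((((N : ℂ) ^ 2 + 1) * (M : ℂ)) / (N : ℂ)) • (∑ i, ((E i * ρ).trace) • E i)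
        - (N : ℂ) • (1 : Matrix (Fin N) (Fin N) ℂ) := by
  have hN0 : (N : ℂ) ≠ 0 := Nat.cast_ne_zero.mpr hN.ne'
  have h := congrArg (fun T => partialTraceRight (T * (1 ⊗ₖ ρ))) hdesign
  simp only [smul_mul, Matrix.sum_mul, add_mul, one_mul, map_smul, map_sum, map_add,
    partialTraceRight_kronecker_mul_one_kronecker, partialTraceRight_one_kronecker,
    partialTraceRight_swapOp_mul_one_kronecker, hρtr, one_smul] at h
  linear_combination (norm := match_scalars <;> field_simp <;> ring)
    (-((N : ℂ) * (N ^ 2 + 1))) • h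

/-- State reconstruction from a rescaled mixed-state 2-design forming a POVM. -/
theorem stmt9 {N M : ℕ} (hN : 0 < N) (hM : 0 < M)
    (E : Fin M → Matrix (Fin N) (Fin N) ℂ)
    (hpsd : ∀ i, (E i).PosSemidef)
    (hsum : ∑ i, E i = (1 : Matrix (Fin N) (Fin N) ℂ))
    (hdesign : ((M : ℂ) / (N : ℂ) ^ 2) • ∑ i, (E i) ⊗ₖ (E i) =
      ((N ^ 4 + N ^ 2 : ℂ))⁻¹ •
        ((N ^ 2 : ℂ) • (1 : Matrix (Fin N × Fin N) (Fin N × Fin N) ℂ) + (N : ℂ) • swapOp N))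
    (ρ : Matrix (Fin N) (Fin N) ℂ) (hρ : ρ.PosSemidef) (hρtr : ρ.trace = 1) :
    ρ = ((((N : ℂ) ^ 2 + 1) * (M : ℂ)) / (N : ℂ)) • (∑ i, ((E i * ρ).trace) • E i)
        - (N : ℂ) • (1 : Matrix (Fin N) (Fin N) ℂ) :=
  stmt9_general hN E hdesign ρ hρtr
end

section
/- If {|ψ_j>}_{j=1}^M ⊂ C^N ⊗ C^N satisfies (1/M)Σ_j (|ψ_j><ψ_j|)^{⊗t} = ∫ (|ψ><ψ|)^{⊗t} dψ_FS (a projective t-design in dimension N²), then the reduced states ρ_j = Tr_B |ψ_j><ψ_j| satisfy (1/M)Σ_j ρ_j^{⊗t} = ∫ ρ^{⊗t} dρ_HS, i.e., they form a mixed-state t-design in dimension N. -/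
/-!
Each entry of `ρ^{⊗t}` for `ρ = Tr_B |v⟩⟨v|` is a finite sum of entries of `(|v⟩⟨v|)^{⊗t}`, so the
design identity, holding entrywise, passes through the sum on both the averaged and the integrated
side.
-/

open MeasureTheory

/-- Partial trace over the second factor of the projector onto a bipartite vector
`v ∈ ℂ^N ⊗ ℂ^N`. -/
noncomputable def redA {N : ℕ} (v : Fin N × Fin N → ℂ) : Matrix (Fin N) (Fin N) ℂ :=
  fun i j => ∑ k : Fin N, v (i, k) * (starRingEnd ℂ) (v (j, k))

lemma prod_redA_eq_sum {N t : ℕ} (v : Fin N × Fin N → ℂ) (x y : Fin t → Fin N) :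
    ∏ k, redA v (x k) (y k) =
      ∑ f : Fin t → Fin N, ∏ k, (v (x k, f k) * (starRingEnd ℂ) (v (y k, f k))) := by
  simp only [redA, Finset.prod_univ_sum, Fintype.piFinset_univ]

theorem stmt15_general {N t M : ℕ}
    (μ : Measure (Fin N × Fin N → ℂ))
    (ψ : Fin M → (Fin N × Fin N → ℂ))
    (hint : ∀ x y : Fin t → Fin N × Fin N,
      Integrable (fun v => ∏ k, (v (x k) * (starRingEnd ℂ) (v (y k)))) μ)
    (hdesign : ∀ x y : Fin t → Fin N × Fin N,
      (M : ℂ)⁻¹ * ∑ j, ∏ k, (ψ j (x k) * (starRingEnd ℂ) (ψ j (y k))) =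
        ∫ v, ∏ k, (v (x k) * (starRingEnd ℂ) (v (y k))) ∂μ) :
    ∀ x y : Fin t → Fin N,
      (M : ℂ)⁻¹ * ∑ j, ∏ k, redA (ψ j) (x k) (y k) =
        ∫ v, ∏ k, redA v (x k) (y k) ∂μ := by
  intro x y
  simp only [prod_redA_eq_sum]
  rw [Finset.sum_comm, Finset.mul_sum, integral_finsetSum _ fun f _ => hint _ _]
  exact Finset.sum_congr rfl fun f _ => hdesign (fun k => (x k, f k)) (fun k => (y k, f k))

/-- If {ψⱼ} is a projective t-design in ℂ^{N²} (with respect to the Fubini–Study measure μ,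
a probability measure on unit vectors), then the reduced states ρⱼ = Tr_B|ψⱼ><ψⱼ| form a
mixed-state t-design: their average t-fold tensor power equals ∫ ρ^{⊗t} dρ_HS, the HS measure
being the push-forward of μ under partial trace (so the right-hand side is written as an
integral over μ). -/
theorem stmt15 {N t M : ℕ} (hN : 0 < N) (hM : 0 < M)
    (μ : Measure (Fin N × Fin N → ℂ)) [IsProbabilityMeasure μ]
    (ψ : Fin M → (Fin N × Fin N → ℂ))
    (hunit : ∀ j, ∑ p : Fin N × Fin N, ‖ψ j p‖ ^ 2 = 1)
    (hμunit : ∀ᵐ v ∂μ, ∑ p : Fin N × Fin N, ‖v p‖ ^ 2 = 1)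
    (hint : ∀ x y : Fin t → Fin N × Fin N,
      Integrable (fun v => ∏ k, (v (x k) * (starRingEnd ℂ) (v (y k)))) μ)
    (hdesign : ∀ x y : Fin t → Fin N × Fin N,
      (M : ℂ)⁻¹ * ∑ j, ∏ k, (ψ j (x k) * (starRingEnd ℂ) (ψ j (y k))) =
        ∫ v, ∏ k, (v (x k) * (starRingEnd ℂ) (v (y k))) ∂μ) :
    ∀ x y : Fin t → Fin N,
      (M : ℂ)⁻¹ * ∑ j, ∏ k, redA (ψ j) (x k) (y k) =
        ∫ v, ∏ k, redA v (x k) (y k) ∂μ :=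
  stmt15_general μ ψ hint hdesign
end

section
/- Let {λ_i}_{i=1}^n ⊂ Δ_N be a simplicial t-design for the HS eigenvalue measure and {U_j}_{j=1}^m ⊂ U(N) a unitary t-design. Then the nm density matrices ρ_{ij} = U_j Λ_i U_j†, with Λ_i = diag(λ_i), satisfy (1/(nm)) Σ_{i,j} ρ_{ij}^{⊗t} = ∫ ρ^{⊗t} dρ_HS, i.e., they form a mixed-state t-design in dimension N. -/
open MeasureTheory Matrix

noncomputable instance {N : ℕ} : MeasurableSpace (Matrix (Fin N) (Fin N) ℂ) :=
  inferInstanceAs (MeasurableSpace (Fin N → Fin N → ℂ))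

/-- The `t`-fold tensor (Kronecker) power of an `N × N` matrix. -/
noncomputable def tpow {N : ℕ} (ρ : Matrix (Fin N) (Fin N) ℂ) (t : ℕ) :
    Matrix (Fin t → Fin N) (Fin t → Fin N) ℂ := fun x y => ∏ k, ρ (x k) (y k)

/-- Diagonal density matrix associated to a probability vector. -/
noncomputable def diagC {N : ℕ} (l : Fin N → ℝ) : Matrix (Fin N) (Fin N) ℂ :=
  Matrix.diagonal (fun i => (l i : ℂ))

lemma tpow_mul {N t : ℕ} (A B : Matrix (Fin N) (Fin N) ℂ) :
    tpow (A * B) t = tpow A t * tpow B t := by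
  ext x y
  simp only [tpow, Matrix.mul_apply]
  rw [Finset.prod_univ_sum]
  simp [Fintype.piFinset_univ, Finset.prod_mul_distrib]

lemma triple_apply {α : Type*} [Fintype α] (M P Q : Matrix α α ℂ) (x y : α) :
    (M * P * Q) x y = ∑ b, ∑ a, M x a * P a b * Q b y := by
  simp [Matrix.mul_apply, Finset.sum_mul]

lemma integrable_entry {N t : ℕ} (μΔ : Measure (Fin N → ℝ)) [IsProbabilityMeasure μΔ]
    (hμΔ : ∀ᵐ l ∂μΔ, (∀ k, 0 ≤ l k) ∧ ∑ k, l k = 1) (a b : Fin t → Fin N) :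
    Integrable (fun l => tpow (diagC l) t a b) μΔ := by
  have hmeas : Measurable (fun l : Fin N → ℝ => tpow (diagC l) t a b) := by
    apply Finset.measurable_prod
    intro k _
    simp only [diagC, Matrix.diagonal_apply]
    by_cases h : a k = b k
    · simp only [h, if_pos rfl]
      exact Complex.measurable_ofReal.comp (measurable_pi_apply _)
    · simp only [if_neg h]
      exact measurable_const
  apply (integrable_const (1 : ℝ)).mono' hmeas.aestronglyMeasurable
  filter_upwards [hμΔ] with l hl
  have hle : ∀ k, ‖(diagC l) (a k) (b k)‖ ≤ 1 := by
    intro k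
    simp only [diagC, Matrix.diagonal_apply]
    by_cases h : a k = b k
    · simp only [h, if_pos rfl, if_true, Complex.norm_real]
      rw [Real.norm_eq_abs, abs_of_nonneg (hl.1 _)]
      calc l (b k) ≤ ∑ k, l k := Finset.single_le_sum (fun i _ => hl.1 i) (Finset.mem_univ _)
        _ = 1 := hl.2
    · simp [h]
  calc ‖tpow (diagC l) t a b‖ = ∏ k, ‖(diagC l) (a k) (b k)‖ := by
        simp only [tpow]; exact norm_prod _ _
    _ ≤ 1 := Finset.prod_le_one (fun k _ => norm_nonneg _) (fun k _ => hle k)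

/-- The Cartesian product of a simplicial t-design (for the HS eigenvalue measure μΔ on the
simplex Δ_N) and a unitary t-design (for the Haar measure μU on U(N)) gives a mixed-state
t-design: the average of (U_j Λ_i U_j†)^{⊗t} equals ∫ρ^{⊗t} dρ_HS, the HS measure
factorizing as the double integral over μΔ and μU. -/
theorem stmt16 {N t n m : ℕ} (hN : 0 < N) (hn : 0 < n) (hm : 0 < m)
    (μΔ : Measure (Fin N → ℝ)) [IsProbabilityMeasure μΔ]
    (μU : Measure (Matrix (Fin N) (Fin N) ℂ)) [IsProbabilityMeasure μU]
    (lam : Fin n → (Fin N → ℝ))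
    (hsimplex : ∀ i, (∀ k, 0 ≤ lam i k) ∧ ∑ k, lam i k = 1)
    (hμΔ : ∀ᵐ l ∂μΔ, (∀ k, 0 ≤ l k) ∧ ∑ k, l k = 1)
    (U : Fin m → Matrix (Fin N) (Fin N) ℂ)
    (hU : ∀ j, U j ∈ Matrix.unitaryGroup (Fin N) ℂ)
    (hμU : ∀ᵐ V ∂μU, V ∈ Matrix.unitaryGroup (Fin N) ℂ)
    (hsimpdesign : ∀ x y : Fin t → Fin N,
      (n : ℂ)⁻¹ * ∑ i, tpow (diagC (lam i)) t x y = ∫ l, tpow (diagC l) t x y ∂μΔ)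
    (hudesign : ∀ (A : Matrix (Fin t → Fin N) (Fin t → Fin N) ℂ) (x y : Fin t → Fin N),
      (m : ℂ)⁻¹ * ∑ j, (tpow (U j) t * A * tpow (U j)ᴴ t) x y =
        ∫ V, (tpow V t * A * tpow Vᴴ t) x y ∂μU) :
    ∀ x y : Fin t → Fin N,
      ((n : ℂ) * (m : ℂ))⁻¹ *
          ∑ i : Fin n, ∑ j : Fin m, tpow (U j * diagC (lam i) * (U j)ᴴ) t x y =
        ∫ V, ∫ l, tpow (V * diagC l * Vᴴ) t x y ∂μΔ ∂μU := by
  intro x y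
  set A : Matrix (Fin t → Fin N) (Fin t → Fin N) ℂ :=
    fun a b => (n : ℂ)⁻¹ * ∑ i, tpow (diagC (lam i)) t a b with hA
  have hAab : ∀ a b, A a b = (n : ℂ)⁻¹ * ∑ i, tpow (diagC (lam i)) t a b := fun a b => rfl
  -- Inner integral computation
  have hinner : ∀ V : Matrix (Fin N) (Fin N) ℂ,
      ∫ l, tpow (V * diagC l * Vᴴ) t x y ∂μΔ = (tpow V t * A * tpow Vᴴ t) x y := by
    intro V
    have heq : ∀ l, tpow (V * diagC l * Vᴴ) t x y =
        ∑ b, ∑ a, tpow V t x a * tpow (diagC l) t a b * tpow Vᴴ t b y := by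
      intro l
      rw [tpow_mul, tpow_mul, triple_apply]
    have hI : ∀ a b : Fin t → Fin N, Integrable
        (fun l => tpow V t x a * tpow (diagC l) t a b * tpow Vᴴ t b y) μΔ :=
      fun a b => ((integrable_entry μΔ hμΔ a b).const_mul _).mul_const _
    simp only [heq]
    rw [triple_apply,
      integral_finset_sum _ (fun b _ => integrable_finset_sum _ (fun a _ => hI a b))]
    refine Finset.sum_congr rfl fun b _ => ?_
    rw [integral_finset_sum _ (fun a _ => hI a b)]
    refine Finset.sum_congr rfl fun a _ => ?_
    simp only [mul_assoc]
    rw [integral_const_mul, integral_mul_const, ← hsimpdesign a b, hAab a b]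
  have hrhs : ∫ V, ∫ l, tpow (V * diagC l * Vᴴ) t x y ∂μΔ ∂μU =
      ∫ V, (tpow V t * A * tpow Vᴴ t) x y ∂μU :=
    integral_congr_ae (Filter.Eventually.of_forall hinner)
  rw [hrhs, ← hudesign A x y]
  -- Identify the finite averages
  have hj : ∀ j, (tpow (U j) t * A * tpow (U j)ᴴ t) x y =
      (n : ℂ)⁻¹ * ∑ i, tpow (U j * diagC (lam i) * (U j)ᴴ) t x y := by
    intro j
    have expand : ∀ i : Fin n, tpow (U j * diagC (lam i) * (U j)ᴴ) t x y =
        ∑ b, ∑ a, tpow (U j) t x a * tpow (diagC (lam i)) t a b * tpow (U j)ᴴ t b y :=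
      fun i => by rw [tpow_mul, tpow_mul, triple_apply]
    rw [triple_apply]
    simp only [expand, hAab]
    calc ∑ b, ∑ a, tpow (U j) t x a * ((n : ℂ)⁻¹ * ∑ i, tpow (diagC (lam i)) t a b)
            * tpow (U j)ᴴ t b y
        = ∑ b, ∑ a, ∑ i, (n : ℂ)⁻¹ *
            (tpow (U j) t x a * tpow (diagC (lam i)) t a b * tpow (U j)ᴴ t b y) := by
          refine Finset.sum_congr rfl fun b _ => Finset.sum_congr rfl fun a _ => ?_
          simp only [Finset.mul_sum, Finset.sum_mul]
          exact Finset.sum_congr rfl fun i _ => by ring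
      _ = ∑ b, ∑ i, ∑ a, (n : ℂ)⁻¹ *
            (tpow (U j) t x a * tpow (diagC (lam i)) t a b * tpow (U j)ᴴ t b y) :=
          Finset.sum_congr rfl fun b _ => Finset.sum_comm
      _ = ∑ i, ∑ b, ∑ a, (n : ℂ)⁻¹ *
            (tpow (U j) t x a * tpow (diagC (lam i)) t a b * tpow (U j)ᴴ t b y) :=
          Finset.sum_comm
      _ = (n : ℂ)⁻¹ * ∑ i, ∑ b, ∑ a,
            tpow (U j) t x a * tpow (diagC (lam i)) t a b * tpow (U j)ᴴ t b y := by
          simp only [Finset.mul_sum]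
  simp only [hj]
  rw [Finset.sum_comm, mul_inv, Finset.mul_sum, Finset.mul_sum]
  refine Finset.sum_congr rfl fun j _ => ?_
  rw [Finset.mul_sum, Finset.mul_sum, Finset.mul_sum]
  exact Finset.sum_congr rfl fun i _ => by ring
end
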